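/- If G has an efficient dominating set and H is a Roman graph, then γ_R(G □ H) ≥ 2γ(G)γ(H). -/

import Mathlib

open Finset

/-- A set `S` is a dominating set of `G` if every vertex outside `S` has a neighbor in `S`. -/
def IsDominatingSet {V : Type*} (G : SimpleGraph V) (S : Set V) : Prop :=
  ∀ v, v ∉ S → ∃ u ∈ S, G.Adj u v

/-- The domination number `γ(G)`. -/
noncomputable def domNum {V : Type*} [Fintype V] (G : SimpleGraph V) : ℕ :=
  sInf {n | ∃ S : Finset V, IsDominatingSet G ↑S ∧ S.card = n}

/-- A Roman dominating function: values in {0,1,2}, every vertex of value 0 has a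
neighbor of value 2. -/
def IsRDF {V : Type*} (G : SimpleGraph V) (f : V → ℕ) : Prop :=
  (∀ v, f v ≤ 2) ∧ ∀ v, f v = 0 → ∃ u, G.Adj u v ∧ f u = 2

/-- The Roman domination number `γ_R(G)`. -/
noncomputable def romanDomNum {V : Type*} [Fintype V] (G : SimpleGraph V) : ℕ :=
  sInf {n | ∃ f : V → ℕ, IsRDF G f ∧ ∑ v, f v = n}

/-- The strong product of graphs. -/
def strongProd {V W : Type*} (G : SimpleGraph V) (H : SimpleGraph W) :
    SimpleGraph (V × W) where
  Adj x y := x ≠ y ∧ (x.1 = y.1 ∨ G.Adj x.1 y.1) ∧ (x.2 = y.2 ∨ H.Adj x.2 y.2)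
  symm := ⟨fun x y => by
    rintro ⟨h, h1, h2⟩
    refine ⟨h.symm, ?_, ?_⟩
    · cases h1 with
      | inl h => exact Or.inl h.symm
      | inr h => exact Or.inr h.symm
    · cases h2 with
      | inl h => exact Or.inl h.symm
      | inr h => exact Or.inr h.symm⟩
  loopless := ⟨fun x => by simp⟩

/-- `G` has an efficient dominating set: a dominating set whose elements have
pairwise disjoint closed neighborhoods. -/
def HasEfficientDomSet {V : Type*} (G : SimpleGraph V) : Prop :=
  ∃ S : Finset V, IsDominatingSet G ↑S ∧
    ∀ u ∈ S, ∀ v ∈ S, u ≠ v →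
      Disjoint (insert u (G.neighborSet u)) (insert v (G.neighborSet v))

/-!
Let `f` be a minimum Roman dominating function of `G □ H` and let `S` be an efficient dominating
set of `G`. For `s ∈ S`, collapsing the `H`-layers over the closed neighbourhood `N[s]`, i.e.
`w ↦ min 2 (∑ g ∈ N[s], f (g, w))`, is a Roman dominating function of `H`: a vertex `(s, w)` of
weight `0` cannot be Roman dominated from inside `N[s] × {w}`, so it is dominated along an
`H`-edge. Since the sets `N[s]` are pairwise disjoint, these `|S|` functions have total weight at
most `γ_R(G □ H)`, whence `γ(G) γ_R(H) ≤ |S| γ_R(H) ≤ γ_R(G □ H)`; for a Roman graph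
`γ_R(H) = 2 γ(H)`.
-/

open SimpleGraph

section

variable {V W : Type*}

theorem domNum_le_card [Fintype V] {G : SimpleGraph V} {S : Finset V}
    (hS : IsDominatingSet G S) : domNum G ≤ #S :=
  Nat.sInf_le ⟨S, hS, rfl⟩

theorem romanDomNum_le_sum [Fintype V] {G : SimpleGraph V} {f : V → ℕ} (hf : IsRDF G f) :
    romanDomNum G ≤ ∑ v, f v :=
  Nat.sInf_le ⟨f, hf, rfl⟩

theorem exists_isRDF_sum_eq_romanDomNum [Fintype V] (G : SimpleGraph V) :
    ∃ f, IsRDF G f ∧ ∑ v, f v = romanDomNum G :=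
  Nat.sInf_mem (s := {n | ∃ f, IsRDF G f ∧ ∑ v, f v = n})
    ⟨_, fun _ => 1, ⟨fun _ => by norm_num, fun _ h => absurd h one_ne_zero⟩, rfl⟩

section Projection

variable [Fintype V] [DecidableEq V] {G : SimpleGraph V} [DecidableRel G.Adj]
  {H : SimpleGraph W} {f : V × W → ℕ}

theorem isRDF_min_two_sum_closedNeighborhood (hf : IsRDF (G □ H) f) (s : V) :
    IsRDF H fun w => min 2 (∑ g ∈ insert s (G.neighborFinset s), f (g, w)) := by
  refine ⟨fun w => min_le_left _ _, fun w hw => ?_⟩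
  have hzero : ∀ g ∈ insert s (G.neighborFinset s), f (g, w) = 0 := by
    simpa using hw
  obtain ⟨⟨a, b⟩, hadj, hab⟩ := hf.2 (s, w) (hzero s (mem_insert_self _ _))
  rcases (boxProd_adj).1 hadj with ⟨hG, rfl⟩ | ⟨hH, rfl⟩
  · have ha : a ∈ insert s (G.neighborFinset s) := by simp [hG.symm]
    simp [hzero a ha] at hab
  · refine ⟨b, hH, min_eq_left ?_⟩
    calc 2 = f (a, b) := hab.symm
      _ ≤ ∑ g ∈ insert a (G.neighborFinset a), f (g, b) :=
        single_le_sum (f := fun g => f (g, b)) (fun _ _ => Nat.zero_le _) (mem_insert_self _ _)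

variable [Fintype W]

theorem card_mul_romanDomNum_le {S : Finset V}
    (hS : (S : Set V).PairwiseDisjoint fun s => insert s (G.neighborFinset s)) :
    #S * romanDomNum H ≤ romanDomNum (G □ H) := by
  obtain ⟨f, hf, hsum⟩ := exists_isRDF_sum_eq_romanDomNum (G □ H)
  calc #S * romanDomNum H
      ≤ ∑ s ∈ S, ∑ w, min 2 (∑ g ∈ insert s (G.neighborFinset s), f (g, w)) := by
        rw [card_eq_sum_ones, sum_mul, one_mul]
        exact sum_le_sum fun s _ => romanDomNum_le_sum (isRDF_min_two_sum_closedNeighborhood hf s)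
    _ ≤ ∑ s ∈ S, ∑ g ∈ insert s (G.neighborFinset s), ∑ w, f (g, w) := by
        gcongr with s
        rw [sum_comm]
        exact sum_le_sum fun _ _ => min_le_right _ _
    _ = ∑ g ∈ S.biUnion fun s => insert s (G.neighborFinset s), ∑ w, f (g, w) :=
        (sum_biUnion hS).symm
    _ ≤ ∑ g, ∑ w, f (g, w) := sum_le_sum_of_subset (subset_univ _)
    _ = romanDomNum (G □ H) := by rw [← Fintype.sum_prod_type', hsum]

end Projection

end

theorem stmt10 {V W : Type*} [Fintype V] [Fintype W]
    (G : SimpleGraph V) (H : SimpleGraph W) (hG : HasEfficientDomSet G)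
    (hRoman : romanDomNum H = 2 * domNum H) :
    romanDomNum (G.boxProd H) ≥ 2 * domNum G * domNum H := by
  classical
  obtain ⟨S, hdom, hdisj⟩ := hG
  have hpacking : (S : Set V).PairwiseDisjoint fun s => insert s (G.neighborFinset s) :=
    fun u hu v hv huv => by
      rw [Function.onFun, ← disjoint_coe, coe_insert, coe_insert, coe_neighborFinset,
        coe_neighborFinset]
      exact hdisj u hu v hv huv
  calc 2 * domNum G * domNum H = domNum G * romanDomNum H := by rw [hRoman]; ring
    _ ≤ #S * romanDomNum H := Nat.mul_le_mul_right _ (domNum_le_card hdom)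
    _ ≤ romanDomNum (G □ H) := card_mul_romanDomNum_le hpacking
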